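/- arXiv:2511.16190 — 4 statements merged into one kernel-verified Lean document; each statement's English description precedes it below -/
import Mathlib

section
/- Let φ be a continuous semi-dynamical system on a metric space with a nonempty compact absorbing set B ∈ S. Then A := Ω(B) attracts B: lim_{t→+∞} dist(φ(t, B), A) = 0, where dist(C, A) = sup_{x∈C} inf_{y∈A} d(x, y) is the Hausdorff semi-distance. -/
open Set Filter Metric
open scoped omegaLimit

/-! Since `B` absorbs itself, `φ t` eventually maps `B` into the compact set `B`. Compactness then
forces `φ t '' B` into any open neighbourhood of the ω-limit set of `B` for all large `t`, in
particular into the open `ε`-neighbourhood `{x | infDist x A < ε}` of any `A ⊇ ω(B)`. -/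

section OmegaLimit

variable {τ α X : Type*}

theorem omegaLimit_atTop_subset_closure_biUnion_image [Preorder τ] [TopologicalSpace X]
    (ϕ : τ → α → X) (s : Set α) (t : τ) :
    ω atTop ϕ s ⊆ closure (⋃ r ∈ Ici t, ϕ r '' s) := by
  rw [iUnion_image_left]
  exact omegaLimit_subset_closure_image2 atTop ϕ s (Ici_mem_atTop t)

theorem eventually_infDist_lt_of_isCompact_absorbing [MetricSpace X] {f : Filter τ}
    {ϕ : τ → α → X} {s : Set α} {c A : Set X} (hc : IsCompact c)
    (hs : ∀ᶠ t in f, MapsTo (ϕ t) s c) (hA : ω f ϕ s ⊆ A) {ε : ℝ} (hε : 0 < ε) :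
    ∀ᶠ t in f, ∀ x ∈ s, infDist (ϕ t x) A < ε := by
  have hopen : IsOpen {y | infDist y A < ε} :=
    isOpen_lt (continuous_infDist_pt A) continuous_const
  have hnhds : ω f ϕ s ⊆ {y | infDist y A < ε} := fun y hy ↦ by
    simpa [infDist_zero_of_mem (hA hy)] using hε
  exact eventually_mapsTo_of_isCompact_absorbing_of_isOpen_of_omegaLimit_subset f ϕ s hc hs
    hopen hnhds

end OmegaLimit

theorem stmt_5_general {X : Type*} [MetricSpace X]
    (φ : ℝ → X → X) (S : Set (Set X)) (B : Set X)
    (hB : B ∈ S) (hBcpt : IsCompact B)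
    (habs : ∀ D ∈ S, ∃ T > 0, ∀ t ≥ T, φ t '' D ⊆ B) :
    ∀ ε > 0, ∃ T : ℝ, ∀ t ≥ T, ∀ x ∈ φ t '' B,
      Metric.infDist x (⋂ s ∈ Ici (0 : ℝ), closure (⋃ r ∈ Ici s, φ r '' B)) < ε := by
  intro ε hε
  obtain ⟨T₀, -, hT₀⟩ := habs B hB
  have hmaps : ∀ᶠ t in atTop, MapsTo (φ t) B B :=
    eventually_atTop.2 ⟨T₀, fun t ht ↦ mapsTo_iff_image_subset.2 (hT₀ t ht)⟩
  have hω : ω atTop φ B ⊆ ⋂ s ∈ Ici (0 : ℝ), closure (⋃ r ∈ Ici s, φ r '' B) :=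
    subset_iInter₂ fun s _ ↦ omegaLimit_atTop_subset_closure_biUnion_image φ B s
  obtain ⟨T, hT⟩ :=
    eventually_atTop.1 (eventually_infDist_lt_of_isCompact_absorbing hBcpt hmaps hω hε)
  refine ⟨T, ?_⟩
  rintro t ht _ ⟨x, hx, rfl⟩
  exact hT t ht x hx

/-- For a continuous semi-dynamical system `φ` with a nonempty compact
absorbing set `B ∈ S`, the omega-limit set `A := Ω(B)` attracts `B`:
`dist (φ t '' B, A) → 0` as `t → +∞`, where `dist` is the Hausdorff
semi-distance `sup_{x ∈ C} inf_{y ∈ A} d(x, y)`. -/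
theorem stmt_5 {X : Type*} [MetricSpace X]
    (φ : ℝ → X → X) (S : Set (Set X)) (B : Set X)
    (hφ0 : ∀ x, φ 0 x = x)
    (hφadd : ∀ t s : ℝ, 0 ≤ t → 0 ≤ s → ∀ x, φ (t + s) x = φ t (φ s x))
    (hS_closed : ∀ D ∈ S, IsClosed D)
    (hS_incl : ∀ D₁ ∈ S, ∀ D₂ : Set X, IsClosed D₂ → D₂ ⊆ D₁ → D₂ ∈ S)
    (hφcont : ∀ t : ℝ, 0 ≤ t → ∀ D ∈ S, ContinuousOn (φ t) D)
    (hB : B ∈ S) (hBne : B.Nonempty) (hBcpt : IsCompact B)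
    (habs : ∀ D ∈ S, ∃ T > 0, ∀ t ≥ T, φ t '' D ⊆ B) :
    ∀ ε > 0, ∃ T : ℝ, ∀ t ≥ T, ∀ x ∈ φ t '' B,
      Metric.infDist x (⋂ s ∈ Ici (0 : ℝ), closure (⋃ r ∈ Ici s, φ r '' B)) < ε :=
  stmt_5_general φ S B hB hBcpt habs
end

section
/- Let H be a Hilbert space with a Gelfand triple V ⊂ H ⊂ V*, where λ* > 0 satisfies ‖u‖_V² ≥ (λ*+1)‖u‖² for u ∈ V (Poincaré). Suppose F: H × P₂(H) → H satisfies: (monotonicity) 2⟨F(u,μ)−F(v,ν), u−v⟩_{V*,V} ≤ C₁ W₂(μ,ν)² + C₂‖u−v‖², and (growth) 2⟨F(u,μ), u⟩ ≤ λ₁‖u‖² + λ₂·μ(‖·‖²) + C. Define A(u,μ) := Δu + F(u,μ) (so 2⟨Δu,u⟩_{V*,V} = −2‖u‖_V²). If C₁ + C₂ < 2λ*, then there exist constants η₁ > η₂ > 0 and C' > 0 such that for all u ∈ V and μ ∈ P₂(H): 2⟨A(u,μ), u⟩_{V*,V} ≤ −η₁‖u‖² + η₂·μ(‖·‖²) +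 C'. -/
/-! Test monotonicity against the scaled point `(t • u, δ₀)` for a small `t ∈ (0, 1)` and apply
growth at that point, where the measure term vanishes since `m δ₀ = 0`; this avoids bounding
`F 0 δ₀` in `V*`, which the abstract pairing does not allow. The `H`-norms that appear are those of
`(1 - t) • u` and `t • u`, so by Poincaré they cost `(C₂ (1 - t) + λ₁ t) ‖u‖_V² / (λ* + 1)`, which
`-2 ‖u‖_V²` absorbs. As `t → 0` the constants tend to `η₁ = 2λ* + 2 - C₂` and `η₂ = C₁`, which
`C₁ + C₂ < 2λ*` separates. -/

open Filter Set Topology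

section GelfandTriple

variable {V D M : Type*} [AddCommGroup V] [Module ℝ V] [AddCommGroup D] [Module ℝ D]
  (pr : D →ₗ[ℝ] V →ₗ[ℝ] ℝ) (nV nH : V → ℝ) (Δ : V →ₗ[ℝ] D)

theorem sq_smul_of_pairing_eq_neg_sq (hΔ : ∀ u, pr (Δ u) u = -(nV u ^ 2)) (c : ℝ) (u : V) :
    nV (c • u) ^ 2 = c ^ 2 * nV u ^ 2 := by
  have h := hΔ (c • u)
  simp only [map_smul, LinearMap.smul_apply, smul_eq_mul, hΔ u] at h
  linear_combination h

theorem sq_smul_le_of_poincare {lamStar : ℝ} (hL : 0 < lamStar + 1)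
    (hΔ : ∀ u, pr (Δ u) u = -(nV u ^ 2))
    (hPoincare : ∀ u, nV u ^ 2 ≥ (lamStar + 1) * nH u ^ 2) (c : ℝ) (u : V) :
    nH (c • u) ^ 2 ≤ c ^ 2 * (nV u ^ 2 / (lamStar + 1)) := by
  rw [mul_div_assoc', ← sq_smul_of_pairing_eq_neg_sq pr nV Δ hΔ, le_div_iff₀ hL, mul_comm]
  exact hPoincare _

theorem two_mul_pairing_le_of_mono_of_growth (m : M → ℝ) (W : M → M → ℝ) (δ₀ : M)
    (F : V → M → D) {lamStar C₁ C₂ lam₁ lam₂ C t : ℝ} (hL : 0 < lamStar + 1)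
    (hC₂ : 0 ≤ C₂) (hlam₁ : 0 ≤ lam₁)
    (hWδ₀ : ∀ μ, W μ δ₀ ^ 2 = m μ) (hmδ₀ : m δ₀ = 0)
    (hPoincare : ∀ u, nV u ^ 2 ≥ (lamStar + 1) * nH u ^ 2)
    (hΔ : ∀ u, pr (Δ u) u = -(nV u ^ 2))
    (hmono : ∀ u v μ ν,
      2 * pr (F u μ - F v ν) (u - v) ≤ C₁ * W μ ν ^ 2 + C₂ * nH (u - v) ^ 2)
    (hgrowth : ∀ u μ, 2 * pr (F u μ) u ≤ lam₁ * nH u ^ 2 + lam₂ * m μ + C)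
    (ht : t ∈ Ioo (0 : ℝ) 1) (u : V) (μ : M) :
    2 * pr (F u μ) u ≤
      C₁ / (1 - t) * m μ + (C₂ * (1 - t) + lam₁ * t) * (nV u ^ 2 / (lamStar + 1)) + C / t := by
  obtain ⟨ht0, ht1⟩ := ht
  have hs : 0 < 1 - t := sub_pos.2 ht1
  set e := nV u ^ 2 / (lamStar + 1)
  set P := pr (F u μ) u
  set Q := pr (F (t • u) δ₀) u
  have hincr : 2 * (P - Q) ≤ C₁ / (1 - t) * m μ + C₂ * (1 - t) * e := by
    have h := hmono u (t • u) μ δ₀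
    rw [show u - t • u = (1 - t) • u by rw [sub_smul, one_smul], hWδ₀] at h
    simp only [map_sub, map_smul, LinearMap.sub_apply, smul_eq_mul] at h
    have hH := mul_le_mul_of_nonneg_left
      (sq_smul_le_of_poincare pr nV nH Δ hL hΔ hPoincare (1 - t) u) hC₂
    refine le_of_mul_le_mul_left ?_ hs
    calc (1 - t) * (2 * (P - Q)) ≤ C₁ * m μ + C₂ * ((1 - t) ^ 2 * e) := by linarith
      _ = (1 - t) * (C₁ / (1 - t) * m μ + C₂ * (1 - t) * e) := by field_simp
  have hscaled : 2 * Q ≤ lam₁ * t * e + C / t := by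
    have h := hgrowth (t • u) δ₀
    simp only [map_smul, smul_eq_mul, hmδ₀, mul_zero, add_zero] at h
    have hH := mul_le_mul_of_nonneg_left
      (sq_smul_le_of_poincare pr nV nH Δ hL hΔ hPoincare t u) hlam₁
    refine le_of_mul_le_mul_left ?_ ht0
    calc t * (2 * Q) ≤ lam₁ * (t ^ 2 * e) + C := by linarith
      _ = t * (lam₁ * t * e + C / t) := by field_simp
  linarith

end GelfandTriple

theorem exists_mem_Ioo_div_one_sub_lt {C₁ C₂ lam₁ c : ℝ} (h : C₁ + C₂ < c) :
    ∃ t ∈ Ioo (0 : ℝ) 1, C₁ / (1 - t) < c - C₂ * (1 - t) - lam₁ * t := by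
  have hcont : ContinuousAt (fun t : ℝ => c - C₂ * (1 - t) - lam₁ * t - C₁ / (1 - t)) 0 := by
    fun_prop (disch := norm_num)
  have hpos : 0 < c - C₂ * (1 - 0) - lam₁ * 0 - C₁ / (1 - 0) := by norm_num; linarith
  have hev : ∀ᶠ t in 𝓝[>] (0 : ℝ), 0 < c - C₂ * (1 - t) - lam₁ * t - C₁ / (1 - t) :=
    nhdsWithin_le_nhds (hcont.eventually (lt_mem_nhds hpos))
  obtain ⟨t, hgap, ht⟩ := (hev.and (Ioo_mem_nhdsGT one_pos)).exists
  exact ⟨t, ht, by linarith⟩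

theorem stmt_6_general {V D M : Type*} [AddCommGroup V] [Module ℝ V]
    [AddCommGroup D] [Module ℝ D]
    (pr : D →ₗ[ℝ] V →ₗ[ℝ] ℝ)         -- the V*-V dual pairing
    (nV nH : V → ℝ)                   -- V-norm and H-norm
    (m : M → ℝ)                       -- second moment μ(‖·‖²)
    (W : M → M → ℝ)                   -- 2-Wasserstein distance
    (δ₀ : M)                          -- Dirac mass at 0
    (Δ : V →ₗ[ℝ] D) (F : V → M → D)
    (lamStar C₁ C₂ lam₁ lam₂ C : ℝ)
    (hC₁ : 0 ≤ C₁) (hC₂ : 0 ≤ C₂) (hlam₁ : 0 ≤ lam₁) (hC : 0 ≤ C)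
    (hm : ∀ μ, 0 ≤ m μ)
    (hWδ₀ : ∀ μ, W μ δ₀ ^ 2 = m μ) (hmδ₀ : m δ₀ = 0)
    (hPoincare : ∀ u, nV u ^ 2 ≥ (lamStar + 1) * nH u ^ 2)
    (hΔ : ∀ u, pr (Δ u) u = -(nV u ^ 2))
    (hmono : ∀ u v μ ν,
      2 * pr (F u μ - F v ν) (u - v) ≤ C₁ * W μ ν ^ 2 + C₂ * nH (u - v) ^ 2)
    (hgrowth : ∀ u μ, 2 * pr (F u μ) u ≤ lam₁ * nH u ^ 2 + lam₂ * m μ + C)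
    (hsmall : C₁ + C₂ < 2 * lamStar) :
    ∃ η₁ η₂ C' : ℝ, η₁ > η₂ ∧ η₂ > 0 ∧ C' > 0 ∧
      ∀ u μ, 2 * pr (Δ u + F u μ) u ≤ -η₁ * nH u ^ 2 + η₂ * m μ + C' := by
  have hL : 0 < lamStar + 1 := by linarith
  obtain ⟨t, ht, hgap⟩ := exists_mem_Ioo_div_one_sub_lt (C₁ := C₁) (C₂ := C₂) (lam₁ := lam₁)
    (c := 2 * lamStar + 1) (by linarith)
  have ht0 : 0 < t := ht.1
  have hη₂ : 0 ≤ C₁ / (1 - t) := div_nonneg hC₁ (sub_pos.2 ht.2).le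
  set η₁ := 2 * (lamStar + 1) - C₂ * (1 - t) - lam₁ * t
  refine ⟨η₁, C₁ / (1 - t) + 1, C / t + 1, by linarith, by positivity, by positivity, fun u μ => ?_⟩
  have hsplit := two_mul_pairing_le_of_mono_of_growth pr nV nH Δ m W δ₀ F hL hC₂ hlam₁ hWδ₀
    hmδ₀ hPoincare hΔ hmono hgrowth ht u μ
  have hH : nH u ^ 2 ≤ nV u ^ 2 / (lamStar + 1) := by
    simpa using sq_smul_le_of_poincare pr nV nH Δ hL hΔ hPoincare 1 u
  have habsorb := mul_le_mul_of_nonneg_left hH (by linarith : 0 ≤ η₁)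
  have hV : nV u ^ 2 = (lamStar + 1) * (nV u ^ 2 / (lamStar + 1)) := by field_simp
  rw [map_add, LinearMap.add_apply, hΔ u]
  linarith [hm μ]

/-- Abstract form of Lemma 5.1: in a Gelfand triple `V ⊂ H ⊂ V*` with
Poincaré constant `λ* > 0` (`‖u‖_V² ≥ (λ*+1)‖u‖²`), if
`F : H × P₂(H) → H` satisfies the monotonicity condition
`2⟨F(u,μ)−F(v,ν), u−v⟩ ≤ C₁ W₂(μ,ν)² + C₂ ‖u−v‖²` and the growth condition
`2⟨F(u,μ), u⟩ ≤ λ₁‖u‖² + λ₂ μ(‖·‖²) + C`, and `A(u,μ) := Δu + F(u,μ)` with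
`⟨Δu, u⟩ = −‖u‖_V²`, and `C₁ + C₂ < 2λ*`, then there exist `η₁ > η₂ > 0` and
`C' > 0` such that `2⟨A(u,μ), u⟩ ≤ −η₁‖u‖² + η₂ μ(‖·‖²) + C'` for all `u, μ`.

Here `V` and `D` (the dual) are abstract real vector spaces, `pr` is the
`V*`-`V` dual pairing, `nV`/`nH` the `V`- and `H`-norms, `M` the space of
probability measures with second moment `m` and 2-Wasserstein distance `W`,
and `δ₀ ∈ M` the Dirac mass at the origin (so `W(μ,δ₀)² = μ(‖·‖²)`). -/
theorem stmt_6 {V D M : Type*} [AddCommGroup V] [Module ℝ V]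
    [AddCommGroup D] [Module ℝ D]
    (pr : D →ₗ[ℝ] V →ₗ[ℝ] ℝ)         -- the V*-V dual pairing
    (nV nH : V → ℝ)                   -- V-norm and H-norm
    (m : M → ℝ)                       -- second moment μ(‖·‖²)
    (W : M → M → ℝ)                   -- 2-Wasserstein distance
    (δ₀ : M)                          -- Dirac mass at 0
    (Δ : V →ₗ[ℝ] D) (F : V → M → D)
    (lamStar C₁ C₂ lam₁ lam₂ C : ℝ)
    (hlamStar : 0 < lamStar)
    (hC₁ : 0 ≤ C₁) (hC₂ : 0 ≤ C₂) (hlam₁ : 0 ≤ lam₁) (hlam₂ : 0 ≤ lam₂) (hC : 0 ≤ C)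
    (hnV : ∀ u, 0 ≤ nV u) (hnH : ∀ u, 0 ≤ nH u)
    (hm : ∀ μ, 0 ≤ m μ) (hW : ∀ μ ν, 0 ≤ W μ ν)
    (hWδ₀ : ∀ μ, W μ δ₀ ^ 2 = m μ) (hmδ₀ : m δ₀ = 0)
    (hPoincare : ∀ u, nV u ^ 2 ≥ (lamStar + 1) * nH u ^ 2)
    (hΔ : ∀ u, pr (Δ u) u = -(nV u ^ 2))
    (hmono : ∀ u v μ ν,
      2 * pr (F u μ - F v ν) (u - v) ≤ C₁ * W μ ν ^ 2 + C₂ * nH (u - v) ^ 2)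
    (hgrowth : ∀ u μ, 2 * pr (F u μ) u ≤ lam₁ * nH u ^ 2 + lam₂ * m μ + C)
    (hsmall : C₁ + C₂ < 2 * lamStar) :
    ∃ η₁ η₂ C' : ℝ, η₁ > η₂ ∧ η₂ > 0 ∧ C' > 0 ∧
      ∀ u μ, 2 * pr (Δ u + F u μ) u ≤ -η₁ * nH u ^ 2 + η₂ * m μ + C' :=
  stmt_6_general pr nV nH m W δ₀ Δ F lamStar C₁ C₂ lam₁ lam₂ C hC₁ hC₂ hlam₁ hC hm hWδ₀ hmδ₀
    hPoincare hΔ hmono hgrowth hsmall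
end

section
/- Suppose F: H × P₂(H) → H satisfies the coercivity 2⟨F(u,μ), u⟩ ≤ λ₁‖u‖² + λ₂ μ(‖·‖²) + C, and suppose 2⟨Au + B(u,u), u⟩ ≤ −2ν_c‖u‖_V² for u ∈ V with ‖u‖_V² ≥ γ²‖u‖². If λ₁ + λ₂ < 2γ²ν_c, then for every λ₁' ∈ [0, 2ν_c − (λ₁+λ₂)/γ²) there exist λ₂' > λ₂ and C' > 0 such that for all u ∈ V and μ ∈ P₂(H): 2⟨Au + B(u,u) + F(u,μ), u⟩ ≤ −λ₁'‖u‖_V² − λ₂'‖u‖² + λ₂ μ(‖·‖²) + C'. -/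
/-! The Poincaré inequality converts the part `(2ν_c − λ₁')‖u‖_V²` of the dissipation into
`(2ν_c − λ₁')γ²‖u‖²`, which absorbs the growth `λ₁‖u‖²` of `F` and leaves
`λ₂' = (2ν_c − λ₁')γ² − λ₁`; the smallness condition on `λ₁'` is exactly `λ₂' > λ₂`. -/

theorem two_mul_add_le_of_poincare {a f h v s νc γ lam₁ lam₂ C lam₁' : ℝ}
    (hlam₁' : lam₁' ≤ 2 * νc) (hP : v ^ 2 ≥ γ ^ 2 * h ^ 2)
    (ha : 2 * a ≤ -2 * νc * v ^ 2) (hf : 2 * f ≤ lam₁ * h ^ 2 + lam₂ * s + C) :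
    2 * (a + f) ≤ -lam₁' * v ^ 2 - ((2 * νc - lam₁') * γ ^ 2 - lam₁) * h ^ 2 + lam₂ * s + C := by
  have hP' : (2 * νc - lam₁') * (γ ^ 2 * h ^ 2) ≤ (2 * νc - lam₁') * v ^ 2 :=
    mul_le_mul_of_nonneg_left hP (sub_nonneg.2 hlam₁')
  linarith

theorem stmt_15_general {V M : Type*}
    (nH nV : V → ℝ)             -- H-norm and V-norm
    (m : M → ℝ)                 -- second moment μ(‖·‖²)
    (pAB : V → ℝ)               -- u ↦ ⟨Au + B(u,u), u⟩
    (pF : V → M → ℝ)            -- (u,μ) ↦ ⟨F(u,μ), u⟩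
    (νc γ lam₁ lam₂ C : ℝ)
    (hγ : 0 < γ)
    (hlam₁ : 0 ≤ lam₁) (hlam₂ : 0 ≤ lam₂) (hC : 0 ≤ C)
    (hPoincare : ∀ u, nV u ^ 2 ≥ γ ^ 2 * nH u ^ 2)
    (hAB : ∀ u, 2 * pAB u ≤ -2 * νc * nV u ^ 2)
    (hF : ∀ u μ, 2 * pF u μ ≤ lam₁ * nH u ^ 2 + lam₂ * m μ + C) :
    ∀ lam₁' : ℝ, 0 ≤ lam₁' → lam₁' < 2 * νc - (lam₁ + lam₂) / γ ^ 2 →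
      ∃ lam₂' > lam₂, ∃ C' > 0, ∀ u μ,
        2 * (pAB u + pF u μ) ≤
          -lam₁' * nV u ^ 2 - lam₂' * nH u ^ 2 + lam₂ * m μ + C' := by
  intro lam₁' _ hlt
  have hgap : lam₁ + lam₂ < (2 * νc - lam₁') * γ ^ 2 :=
    (div_lt_iff₀ (by positivity)).mp (lt_sub_comm.mp hlt)
  have hlam₁'_le : lam₁' ≤ 2 * νc := by
    have := div_nonneg (add_nonneg hlam₁ hlam₂) (sq_nonneg γ)
    linarith
  refine ⟨(2 * νc - lam₁') * γ ^ 2 - lam₁, by linarith, C + 1, by linarith, fun u μ => ?_⟩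
  have := two_mul_add_le_of_poincare hlam₁'_le (hPoincare u) (hAB u) (hF u μ)
  linarith

/-- Abstract form of Lemma 5.7(i): if `2⟨Au + B(u,u), u⟩ ≤ −2ν_c‖u‖_V²`,
`‖u‖_V² ≥ γ²‖u‖²` (Poincaré), and `F` is coercive,
`2⟨F(u,μ), u⟩ ≤ λ₁‖u‖² + λ₂ μ(‖·‖²) + C`, with `λ₁ + λ₂ < 2γ²ν_c`, then for
every `λ₁' ∈ [0, 2ν_c − (λ₁+λ₂)/γ²)` there exist `λ₂' > λ₂` and `C' > 0`
such that
`2⟨Au + B(u,u) + F(u,μ), u⟩ ≤ −λ₁'‖u‖_V² − λ₂'‖u‖² + λ₂ μ(‖·‖²) + C'`.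
Here `pAB u` abstracts `⟨Au + B(u,u), u⟩` and `pF u μ` abstracts
`⟨F(u,μ), u⟩`. -/
theorem stmt_15 {V M : Type*}
    (nH nV : V → ℝ)             -- H-norm and V-norm
    (m : M → ℝ)                 -- second moment μ(‖·‖²)
    (pAB : V → ℝ)               -- u ↦ ⟨Au + B(u,u), u⟩
    (pF : V → M → ℝ)            -- (u,μ) ↦ ⟨F(u,μ), u⟩
    (νc γ lam₁ lam₂ C : ℝ)
    (hνc : 0 < νc) (hγ : 0 < γ)
    (hlam₁ : 0 ≤ lam₁) (hlam₂ : 0 ≤ lam₂) (hC : 0 ≤ C)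
    (hnH : ∀ u, 0 ≤ nH u) (hnV : ∀ u, 0 ≤ nV u) (hm : ∀ μ, 0 ≤ m μ)
    (hPoincare : ∀ u, nV u ^ 2 ≥ γ ^ 2 * nH u ^ 2)
    (hAB : ∀ u, 2 * pAB u ≤ -2 * νc * nV u ^ 2)
    (hF : ∀ u μ, 2 * pF u μ ≤ lam₁ * nH u ^ 2 + lam₂ * m μ + C)
    (hsmall : lam₁ + lam₂ < 2 * γ ^ 2 * νc) :
    ∀ lam₁' : ℝ, 0 ≤ lam₁' → lam₁' < 2 * νc - (lam₁ + lam₂) / γ ^ 2 →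
      ∃ lam₂' > lam₂, ∃ C' > 0, ∀ u μ,
        2 * (pAB u + pF u μ) ≤
          -lam₁' * nV u ^ 2 - lam₂' * nH u ^ 2 + lam₂ * m μ + C' :=
  stmt_15_general nH nV m pAB pF νc γ lam₁ lam₂ C hγ hlam₁ hlam₂ hC hPoincare hAB hF
end

section
/- Let φ: ℝ₊ × Ω × P* × X → X be a jointly continuous cocycle over a metric dynamical system θ₁ and a set-valued backward extension Θ₂ on a compact set P*, and assume φ is pullback D-asymptotically compact: for any ω, D ∈ D, t_n → ∞, p_n ∈ P*, q_n ∈ Θ_{2,−t_n}p_n, x_n ∈ D(θ_{1,−t_n}ω), the sequence φ(t_n, θ_{1,−t_n}ω, q_n, x_n) has a convergent subsequence. Then for every ω and p ∈ P*, the set Ã(ω,p) := ⋂_{τ≥0} closure(⋃_{t≥τ} ⋃_{q∈Θ_{2,−t}p} φ(t, θ_{1,−t}ω, q, K(θ_{1,−t}ω))) is nonempty, where K ∈ D is a nonempty closed attracting set. -/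
open Set Filter Topology

/- Pick `qₙ ∈ Θ_{2,−n} p` (possible since `θ₂ n` maps `P*` onto itself) and `xₙ ∈ K(θ₁(−n)ω)`.
Pullback asymptotic compactness gives a convergent subsequence of `φ(n, θ₁(−n)ω, qₙ, xₙ)`, and the
limit of such a sequence along times tending to infinity lies in every closure defining `Ã(ω,p)`. -/

theorem mem_closure_iUnion_Ici_of_tendsto {ι α X : Type*} [Preorder α] [TopologicalSpace X]
    {l : Filter ι} [l.NeBot] {S : α → Set X} {t : ι → α} {y : ι → X} {x : X}
    (ht : Tendsto t l atTop) (hy : ∀ i, y i ∈ S (t i)) (hx : Tendsto y l (𝓝 x)) (τ : α) :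
    x ∈ closure (⋃ s ∈ Ici τ, S s) :=
  mem_closure_of_tendsto hx <| (ht.eventually_ge_atTop τ).mono fun i hi =>
    mem_biUnion (mem_Ici.2 hi) (hy i)

theorem stmt_19_general {Ω P X : Type*} [MetricSpace X]
    (θ₁ : ℝ → Ω → Ω) (θ₂ : ℝ → P → P) (Pstar : Set P)
    (φ : ℝ → Ω → P → X → X)
    (𝒟 : Set (Ω → Set X)) (K : Ω → Set X)
    (hPstar_inv : ∀ t : ℝ, 0 ≤ t → θ₂ t '' Pstar = Pstar)
    -- K is a nonempty closed member of 𝒟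
    (hK𝒟 : K ∈ 𝒟) (hKne : ∀ ω, (K ω).Nonempty)
    -- pullback 𝒟-asymptotic compactness of φ
    (hAC : ∀ ω, ∀ B ∈ 𝒟, ∀ (tn : ℕ → ℝ) (pn qn : ℕ → P) (xn : ℕ → X),
      Tendsto tn atTop atTop → (∀ n, 0 ≤ tn n) →
      (∀ n, pn n ∈ Pstar) →
      (∀ n, qn n ∈ Pstar ∧ θ₂ (tn n) (qn n) = pn n) →
      (∀ n, xn n ∈ B (θ₁ (-(tn n)) ω)) →
      ∃ (ns : ℕ → ℕ) (x : X), StrictMono ns ∧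
        Tendsto (fun k => φ (tn (ns k)) (θ₁ (-(tn (ns k))) ω) (qn (ns k))
          (xn (ns k))) atTop (nhds x)) :
    ∀ ω : Ω, ∀ p ∈ Pstar,
      (⋂ τ ∈ Ici (0:ℝ), closure (⋃ t ∈ Ici τ,
        ⋃ q ∈ {q ∈ Pstar | θ₂ t q = p},
          φ t (θ₁ (-t) ω) q '' K (θ₁ (-t) ω))).Nonempty := by
  intro ω p hp
  choose qn hqn using fun n : ℕ => ((hPstar_inv n n.cast_nonneg).symm ▸ hp : p ∈ θ₂ n '' Pstar)
  choose xn hxn using fun n : ℕ => hKne (θ₁ (-n) ω)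
  obtain ⟨ns, x, hns, hx⟩ := hAC ω K hK𝒟 (fun n => n) (fun _ => p) qn xn
    tendsto_natCast_atTop_atTop (fun n => n.cast_nonneg) (fun _ => hp) hqn hxn
  refine ⟨x, mem_iInter₂.2 fun τ _ => mem_closure_iUnion_Ici_of_tendsto
    (tendsto_natCast_atTop_atTop.comp hns.tendsto_atTop) (fun k => ?_) hx τ⟩
  exact mem_biUnion (hqn (ns k)) (mem_image_of_mem _ (hxn (ns k)))

/-- Step 1 of Theorem 2.9: for a jointly continuous, pullback
`𝒟`-asymptotically compact cocycle `φ` over a metric dynamical system `θ₁`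
and the set-valued backward extension of `θ₂` on the compact global attractor
`P*`, and a nonempty closed attracting set `K ∈ 𝒟`, the set
`Ã(ω,p) := ⋂_{τ≥0} closure(⋃_{t≥τ} ⋃_{q ∈ Θ_{2,−t} p} φ(t, θ₁(−t)ω, q, K(θ₁(−t)ω)))`
is nonempty for every `ω` and `p ∈ P*`. Here
`Θ_{2,−t} p = {q ∈ P* : θ₂ t q = p}`. -/
theorem stmt_19 {Ω P X : Type*} [MetricSpace P] [MetricSpace X]
    (θ₁ : ℝ → Ω → Ω) (θ₂ : ℝ → P → P) (Pstar : Set P)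
    (φ : ℝ → Ω → P → X → X)
    (𝒟 : Set (Ω → Set X)) (K : Ω → Set X)
    (hθ₁0 : ∀ ω, θ₁ 0 ω = ω)
    (hθ₁add : ∀ t s : ℝ, ∀ ω, θ₁ (t + s) ω = θ₁ t (θ₁ s ω))
    (hθ₂0 : ∀ p, θ₂ 0 p = p)
    (hθ₂add : ∀ t s : ℝ, 0 ≤ t → 0 ≤ s → ∀ p, θ₂ (t + s) p = θ₂ t (θ₂ s p))
    (hPstar_ne : Pstar.Nonempty) (hPstar_cpt : IsCompact Pstar)
    (hPstar_inv : ∀ t : ℝ, 0 ≤ t → θ₂ t '' Pstar = Pstar)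
    (hφ0 : ∀ ω p x, φ 0 ω p x = x)
    (hφcoc : ∀ s t : ℝ, 0 ≤ s → 0 ≤ t → ∀ ω, ∀ p ∈ Pstar, ∀ x,
      φ (s + t) ω p x = φ t (θ₁ s ω) (θ₂ s p) (φ s ω p x))
    -- joint continuity of φ(t,ω,·,·) on P* × X
    (hφcont : ∀ t : ℝ, 0 ≤ t → ∀ ω,
      ContinuousOn (fun px : P × X => φ t ω px.1 px.2) (Pstar ×ˢ univ))
    -- K is a nonempty closed member of 𝒟
    (hK𝒟 : K ∈ 𝒟) (hKne : ∀ ω, (K ω).Nonempty) (hKcl : ∀ ω, IsClosed (K ω))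
    -- K is attracting
    (hKattr : ∀ ω, ∀ B ∈ 𝒟, ∀ ε > 0, ∃ T : ℝ, ∀ t ≥ T, ∀ p ∈ Pstar,
      ∀ x ∈ B (θ₁ (-t) ω), Metric.infDist (φ t (θ₁ (-t) ω) p x) (K ω) < ε)
    -- pullback 𝒟-asymptotic compactness of φ
    (hAC : ∀ ω, ∀ B ∈ 𝒟, ∀ (tn : ℕ → ℝ) (pn qn : ℕ → P) (xn : ℕ → X),
      Tendsto tn atTop atTop → (∀ n, 0 ≤ tn n) →
      (∀ n, pn n ∈ Pstar) →
      (∀ n, qn n ∈ Pstar ∧ θ₂ (tn n) (qn n) = pn n) →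
      (∀ n, xn n ∈ B (θ₁ (-(tn n)) ω)) →
      ∃ (ns : ℕ → ℕ) (x : X), StrictMono ns ∧
        Tendsto (fun k => φ (tn (ns k)) (θ₁ (-(tn (ns k))) ω) (qn (ns k))
          (xn (ns k))) atTop (nhds x)) :
    ∀ ω : Ω, ∀ p ∈ Pstar,
      (⋂ τ ∈ Ici (0:ℝ), closure (⋃ t ∈ Ici τ,
        ⋃ q ∈ {q ∈ Pstar | θ₂ t q = p},
          φ t (θ₁ (-t) ω) q '' K (θ₁ (-t) ω))).Nonempty :=
  stmt_19_general θ₁ θ₂ Pstar φ 𝒟 K hPstar_inv hK𝒟 hKne hAC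
end
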